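/- arXiv:2001.01794 — 8 statements merged into one kernel-verified Lean document; each statement's English description precedes it below -/
import Mathlib

section
/- Assume that for every k ∈ K the set {r : ℝ | ∃ z, G (ȳ k) z ∧ r = f (ȳ k) z} is bounded below. Let (x, y, z) be feasible for the MINLP. Then there exists k ∈ K with ȳ k = y such that, defining λ : K → ℝ by λ k = 1 and λ k' = 0 for k' ≠ k, the pair (x, λ) is feasible for the master problem (MP) and its objective value satisfies (∑ j, c j * x j) + ∑ k', λ k' * f̄ k' ≤ (∑ j, c j * x j) + f y z. -/
/-- Every feasible point of the MINLP (1) yields, via the unique column `k`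
with `ȳ k = y`, a feasible point of the master problem (MP) whose objective
value is no larger than the MINLP objective value. -/
theorem minlp_to_master
    (p m n : ℕ) (c : Fin m → ℝ) (b : Fin n → ℝ)
    (A : Matrix (Fin n) (Fin m) ℝ) (D : Matrix (Fin n) (Fin p) ℝ)
    (J : Set (Fin m)) (ymin ymax : Fin p → ℤ)
    (Z : Type*) (G : (Fin p → ℤ) → Z → Prop) (f : (Fin p → ℤ) → Z → ℝ)
    (K : Type*) [Fintype K] (ybar : K → (Fin p → ℤ))
    (hinj : Function.Injective ybar)
    (hrange : Set.range ybar =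
      {y : Fin p → ℤ | (ymin ≤ y ∧ y ≤ ymax) ∧ ∃ z, G y z})
    (fbar : K → ℝ)
    (hfbar : ∀ k, fbar k = sInf {r : ℝ | ∃ z, G (ybar k) z ∧ r = f (ybar k) z})
    (hbdd : ∀ k, BddBelow {r : ℝ | ∃ z, G (ybar k) z ∧ r = f (ybar k) z})
    -- (x, y, z) feasible for the MINLP:
    (x : Fin m → ℝ) (y : Fin p → ℤ) (z : Z)
    (hx : 0 ≤ x) (hxint : ∀ j ∈ J, x j ∈ Set.range (Int.cast : ℤ → ℝ))
    (hcon : b ≤ A.mulVec x + D.mulVec (fun i => (y i : ℝ)))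
    (hylb : ymin ≤ y) (hyub : y ≤ ymax) (hG : G y z) :
    ∃ k : K, ybar k = y ∧
      ∀ lam : K → ℝ, (lam k = 1 ∧ ∀ k' ≠ k, lam k' = 0) →
        -- (x, λ) is feasible for (MP):
        ((0 ≤ x) ∧ (∀ j ∈ J, x j ∈ Set.range (Int.cast : ℤ → ℝ)) ∧
          (∀ k', lam k' ∈ ({0, 1} : Set ℝ)) ∧ (∑ k', lam k') = 1 ∧
          b ≤ A.mulVec x +
              D.mulVec (∑ k', lam k' • fun i => ((ybar k') i : ℝ))) ∧
        -- and its objective value is at most the MINLP objective value: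
        (∑ j, c j * x j) + (∑ k', lam k' * fbar k') ≤
          (∑ j, c j * x j) + f y z := by
  classical
  have hy : y ∈ Set.range ybar := by
    rw [hrange]; exact ⟨⟨hylb, hyub⟩, z, hG⟩
  obtain ⟨k, hk⟩ := hy
  refine ⟨k, hk, ?_⟩
  rintro lam ⟨h1, h0⟩
  have hlam : lam = fun k' => if k' = k then 1 else 0 := by
    funext k'
    by_cases h : k' = k
    · simp [h, h1]
    · simp [h, h0 k' h]
  subst hlam
  refine ⟨⟨hx, hxint, ?_, ?_, ?_⟩, ?_⟩
  · intro k'; by_cases h : k' = k <;> simp [h]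
  · simp
  · have hs : (∑ k', (if k' = k then (1:ℝ) else 0) • fun i => ((ybar k') i : ℝ))
        = fun i => ((y i : ℝ)) := by
      have : (∑ k', (if k' = k then (1:ℝ) else 0) • fun i => ((ybar k') i : ℝ))
          = ∑ k', (if k' = k then (fun i => ((ybar k') i : ℝ)) else 0) := by
        apply Finset.sum_congr rfl
        intro k' _
        by_cases h : k' = k <;> simp [h]
      rw [this, Finset.sum_ite_eq' Finset.univ k]
      simp [hk]
    rw [hs]; exact hcon
  · have hle : fbar k ≤ f y z := by
      rw [hfbar k]
      exact csInf_le (hbdd k) ⟨z, by rw [hk]; exact ⟨hG, rfl⟩⟩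
    have hs2 : (∑ k', (if k' = k then (1:ℝ) else 0) * fbar k') = fbar k := by
      simp [ite_mul]
    rw [hs2]
    linarith
end

section
/- Assume that for every k ∈ K the infimum f̄ k is attained: there exists z_k with G (ȳ k) z_k and f (ȳ k) z_k = f̄ k. Let (x, λ) be feasible for the master problem (MP). Then there exists k ∈ K with λ k = 1 and λ k' = 0 for all k' ≠ k, and the triple (x, ȳ k, z_k) is feasible for the MINLP with objective value (∑ j, c j * x j) + f (ȳ k) z_k equal to the (MP) objective value (∑ j, c j * x j) + ∑ k', λ k' * f̄ k'. -/
/-- If each column cost `f̄ k` is attained by some `z_k`, then every feasible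
point of the master problem (MP) selects exactly one column `k`, and
`(x, ȳ k, z_k)` is feasible for the MINLP (1) with the same objective value. -/
theorem master_to_minlp
    (p m n : ℕ) (c : Fin m → ℝ) (b : Fin n → ℝ)
    (A : Matrix (Fin n) (Fin m) ℝ) (D : Matrix (Fin n) (Fin p) ℝ)
    (J : Set (Fin m)) (ymin ymax : Fin p → ℤ)
    (Z : Type*) (G : (Fin p → ℤ) → Z → Prop) (f : (Fin p → ℤ) → Z → ℝ)
    (K : Type*) [Fintype K] (ybar : K → (Fin p → ℤ))
    (hinj : Function.Injective ybar)
    (hrange : Set.range ybar =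
      {y : Fin p → ℤ | (ymin ≤ y ∧ y ≤ ymax) ∧ ∃ z, G y z})
    (fbar : K → ℝ)
    (hfbar : ∀ k, fbar k = sInf {r : ℝ | ∃ z, G (ybar k) z ∧ r = f (ybar k) z})
    -- the infimum f̄ k is attained by z_k:
    (zsel : K → Z)
    (hattain : ∀ k, G (ybar k) (zsel k) ∧ f (ybar k) (zsel k) = fbar k)
    -- (x, λ) feasible for (MP):
    (x : Fin m → ℝ) (lam : K → ℝ)
    (hx : 0 ≤ x) (hxint : ∀ j ∈ J, x j ∈ Set.range (Int.cast : ℤ → ℝ))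
    (hlam01 : ∀ k, lam k ∈ ({0, 1} : Set ℝ)) (hlamsum : (∑ k, lam k) = 1)
    (hcon : b ≤ A.mulVec x +
        D.mulVec (∑ k, lam k • fun i => ((ybar k) i : ℝ))) :
    ∃ k : K, lam k = 1 ∧ (∀ k' ≠ k, lam k' = 0) ∧
      -- (x, ȳ k, z_k) is feasible for the MINLP:
      (0 ≤ x) ∧ (∀ j ∈ J, x j ∈ Set.range (Int.cast : ℤ → ℝ)) ∧
      b ≤ A.mulVec x + D.mulVec (fun i => ((ybar k) i : ℝ)) ∧
      ymin ≤ ybar k ∧ ybar k ≤ ymax ∧ G (ybar k) (zsel k) ∧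
      -- with objective value equal to the (MP) objective value:
      (∑ j, c j * x j) + f (ybar k) (zsel k) =
        (∑ j, c j * x j) + ∑ k', lam k' * fbar k' := by
  classical
  -- find k with lam k = 1
  have hne : ∃ k, lam k ≠ 0 := by
    by_contra h
    push_neg at h
    simp [h] at hlamsum
  obtain ⟨k, hk0⟩ := hne
  have hk1 : lam k = 1 := (hlam01 k).resolve_left hk0
  have hothers : ∀ k' ≠ k, lam k' = 0 := by
    intro k' hk'
    by_contra h0
    have hk'1 : lam k' = 1 := (hlam01 k').resolve_left h0
    have hnonneg : ∀ j ∈ (Finset.univ.erase k).erase k', (0:ℝ) ≤ lam j := by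
      intro j _
      rcases hlam01 j with h | h <;> simp_all
    have : (2:ℝ) ≤ ∑ j, lam j := by
      rw [← Finset.add_sum_erase _ _ (Finset.mem_univ k),
        ← Finset.add_sum_erase _ _ (Finset.mem_erase.mpr ⟨hk', Finset.mem_univ k'⟩),
        hk1, hk'1]
      have := Finset.sum_nonneg hnonneg
      linarith
    rw [hlamsum] at this; linarith
  have hsum : (∑ k', lam k' • fun i => ((ybar k') i : ℝ)) =
      (fun i => ((ybar k) i : ℝ)) := by
    rw [Finset.sum_eq_single k]
    · simp [hk1]
    · intro k' _ hk'; simp [hothers k' hk']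
    · intro h; exact absurd (Finset.mem_univ k) h
  have hmem : ybar k ∈ {y : Fin p → ℤ | (ymin ≤ y ∧ y ≤ ymax) ∧ ∃ z, G y z} := by
    rw [← hrange]; exact ⟨k, rfl⟩
  have hfsum : (∑ k', lam k' * fbar k') = fbar k := by
    rw [Finset.sum_eq_single k]
    · simp [hk1]
    · intro k' _ hk'; simp [hothers k' hk']
    · intro h; exact absurd (Finset.mem_univ k) h
  exact ⟨k, hk1, hothers, hx, hxint, by rwa [hsum] at hcon,
    hmem.1.1, hmem.1.2, (hattain k).1, by rw [hfsum, (hattain k).2]⟩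
end

section
/- Assume that for every k ∈ K the set {r : ℝ | ∃ z, G (ȳ k) z ∧ r = f (ȳ k) z} is bounded below and its infimum f̄ k is attained (there exists z_k with G (ȳ k) z_k and f (ȳ k) z_k = f̄ k). Assume the MINLP is feasible and its set of feasible objective values is bounded below. Then the optimal values coincide: sInf {v : ℝ | ∃ x y z, (x,y,z) is feasible for the MINLP ∧ v = (∑ j, c j * x j) + f y z} = sInf {v : ℝ | ∃ x λ, (x,λ) is feasible for (MP) ∧ v = (∑ j, c j * x j) + ∑ k, λ k * f̄ k}; that is, the MINLP and the master problem (MP) have the same optimal value v^MP. -/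
lemma pick_one_aux {K : Type*} [Fintype K] (lam : K → ℝ)
    (h01 : ∀ k, lam k ∈ ({0, 1} : Set ℝ)) (hsum : (∑ k, lam k) = 1) :
    ∃ k₀, lam k₀ = 1 ∧ ∀ k, k ≠ k₀ → lam k = 0 := by
  classical
  have h01' : ∀ k, lam k = 0 ∨ lam k = 1 := fun k => by
    have := h01 k
    simpa [Set.mem_insert_iff] using this
  have hnn : ∀ k, (0:ℝ) ≤ lam k := fun k => by
    rcases h01' k with h | h <;> simp [h]
  have hex : ∃ k₀, lam k₀ ≠ 0 := by
    by_contra h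
    push_neg at h
    simp [h] at hsum
  obtain ⟨k₀, hk₀⟩ := hex
  have hk1 : lam k₀ = 1 := by
    rcases h01' k₀ with h | h
    · exact absurd h hk₀
    · exact h
  refine ⟨k₀, hk1, fun k hk => ?_⟩
  by_contra hne
  have hk1' : lam k = 1 := by
    rcases h01' k with h | h
    · exact absurd h hne
    · exact h
  have hle := Finset.sum_le_sum_of_subset_of_nonneg
    (Finset.subset_univ ({k₀, k} : Finset K)) (fun i _ _ => hnn i)
  rw [Finset.sum_pair (Ne.symm hk), hsum, hk1, hk1'] at hle
  linarith

/-- Equivalence of optimal values: the MINLP (1) and the master problem (MP)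
obtained through the discretization-based Dantzig–Wolfe reformulation have
the same optimal value `v^MP`. -/
theorem minlp_master_same_optimal_value
    (p m n : ℕ) (c : Fin m → ℝ) (b : Fin n → ℝ)
    (A : Matrix (Fin n) (Fin m) ℝ) (D : Matrix (Fin n) (Fin p) ℝ)
    (J : Set (Fin m)) (ymin ymax : Fin p → ℤ)
    (Z : Type*) (G : (Fin p → ℤ) → Z → Prop) (f : (Fin p → ℤ) → Z → ℝ)
    (K : Type*) [Fintype K] (ybar : K → (Fin p → ℤ))
    (hinj : Function.Injective ybar)
    (hrange : Set.range ybar =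
      {y : Fin p → ℤ | (ymin ≤ y ∧ y ≤ ymax) ∧ ∃ z, G y z})
    (fbar : K → ℝ)
    (hfbar : ∀ k, fbar k = sInf {r : ℝ | ∃ z, G (ybar k) z ∧ r = f (ybar k) z})
    (hbdd : ∀ k, BddBelow {r : ℝ | ∃ z, G (ybar k) z ∧ r = f (ybar k) z})
    -- the infimum f̄ k is attained by z_k:
    (zsel : K → Z)
    (hattain : ∀ k, G (ybar k) (zsel k) ∧ f (ybar k) (zsel k) = fbar k)
    -- the MINLP is feasible and its objective values are bounded below:
    (hfeas : ∃ (x : Fin m → ℝ) (y : Fin p → ℤ) (z : Z),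
      0 ≤ x ∧ (∀ j ∈ J, x j ∈ Set.range (Int.cast : ℤ → ℝ)) ∧
      b ≤ A.mulVec x + D.mulVec (fun i => (y i : ℝ)) ∧
      ymin ≤ y ∧ y ≤ ymax ∧ G y z)
    (hvbdd : BddBelow {v : ℝ | ∃ (x : Fin m → ℝ) (y : Fin p → ℤ) (z : Z),
      (0 ≤ x ∧ (∀ j ∈ J, x j ∈ Set.range (Int.cast : ℤ → ℝ)) ∧
        b ≤ A.mulVec x + D.mulVec (fun i => (y i : ℝ)) ∧
        ymin ≤ y ∧ y ≤ ymax ∧ G y z) ∧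
      v = (∑ j, c j * x j) + f y z}) :
    sInf {v : ℝ | ∃ (x : Fin m → ℝ) (y : Fin p → ℤ) (z : Z),
        (0 ≤ x ∧ (∀ j ∈ J, x j ∈ Set.range (Int.cast : ℤ → ℝ)) ∧
          b ≤ A.mulVec x + D.mulVec (fun i => (y i : ℝ)) ∧
          ymin ≤ y ∧ y ≤ ymax ∧ G y z) ∧
        v = (∑ j, c j * x j) + f y z} =
      sInf {v : ℝ | ∃ (x : Fin m → ℝ) (lam : K → ℝ),
        (0 ≤ x ∧ (∀ j ∈ J, x j ∈ Set.range (Int.cast : ℤ → ℝ)) ∧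
          (∀ k, lam k ∈ ({0, 1} : Set ℝ)) ∧ (∑ k, lam k) = 1 ∧
          b ≤ A.mulVec x +
            D.mulVec (∑ k, lam k • fun i => ((ybar k) i : ℝ))) ∧
        v = (∑ j, c j * x j) + ∑ k, lam k * fbar k} := by
  classical
  set S := {v : ℝ | ∃ (x : Fin m → ℝ) (y : Fin p → ℤ) (z : Z),
        (0 ≤ x ∧ (∀ j ∈ J, x j ∈ Set.range (Int.cast : ℤ → ℝ)) ∧
          b ≤ A.mulVec x + D.mulVec (fun i => (y i : ℝ)) ∧
          ymin ≤ y ∧ y ≤ ymax ∧ G y z) ∧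
        v = (∑ j, c j * x j) + f y z} with hSdef
  set T := {v : ℝ | ∃ (x : Fin m → ℝ) (lam : K → ℝ),
        (0 ≤ x ∧ (∀ j ∈ J, x j ∈ Set.range (Int.cast : ℤ → ℝ)) ∧
          (∀ k, lam k ∈ ({0, 1} : Set ℝ)) ∧ (∑ k, lam k) = 1 ∧
          b ≤ A.mulVec x +
            D.mulVec (∑ k, lam k • fun i => ((ybar k) i : ℝ))) ∧
        v = (∑ j, c j * x j) + ∑ k, lam k * fbar k} with hTdef
  -- T ⊆ S
  have hTS : T ⊆ S := by
    rintro v ⟨x, lam, ⟨hx0, hxJ, h01, hsum, hcon⟩, hv⟩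
    obtain ⟨k₀, hk1, hzero⟩ := pick_one_aux lam h01 hsum
    have hvec : (∑ k, lam k • fun i => ((ybar k) i : ℝ))
        = fun i => ((ybar k₀) i : ℝ) := by
      rw [Finset.sum_eq_single k₀]
      · rw [hk1, one_smul]
      · intro k _ hk
        rw [hzero k hk, zero_smul]
      · intro h
        exact absurd (Finset.mem_univ k₀) h
    have hsumval : (∑ k, lam k * fbar k) = fbar k₀ := by
      rw [Finset.sum_eq_single k₀]
      · rw [hk1, one_mul]
      · intro k _ hk
        rw [hzero k hk, zero_mul]
      · intro h
        exact absurd (Finset.mem_univ k₀) h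
    have hmem : ybar k₀ ∈ {y : Fin p → ℤ | (ymin ≤ y ∧ y ≤ ymax) ∧ ∃ z, G y z} := by
      rw [← hrange]
      exact Set.mem_range_self k₀
    obtain ⟨⟨hy1, hy2⟩, -⟩ := hmem
    refine ⟨x, ybar k₀, zsel k₀, ⟨hx0, hxJ, ?_, hy1, hy2, (hattain k₀).1⟩, ?_⟩
    · rwa [hvec] at hcon
    · rw [hv, hsumval, (hattain k₀).2]
  -- T nonempty
  have hTne : T.Nonempty := by
    obtain ⟨x, y, z, hx0, hxJ, hcon, hy1, hy2, hG⟩ := hfeas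
    have : y ∈ Set.range ybar := by
      rw [hrange]
      exact ⟨⟨hy1, hy2⟩, z, hG⟩
    obtain ⟨k₀, hk₀⟩ := this
    refine ⟨(∑ j, c j * x j) + ∑ k, (if k = k₀ then (1:ℝ) else 0) * fbar k,
      x, fun k => if k = k₀ then 1 else 0, ⟨hx0, hxJ, ?_, ?_, ?_⟩, rfl⟩
    · intro k
      by_cases h : k = k₀ <;> simp [h]
    · simp
    · have hvec : (∑ k, (if k = k₀ then (1:ℝ) else 0) • fun i => ((ybar k) i : ℝ))
          = fun i => ((y) i : ℝ) := by
        rw [Finset.sum_eq_single k₀]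
        · simp [hk₀]
        · intro k _ hk
          simp [hk]
        · intro h
          exact absurd (Finset.mem_univ k₀) h
      rwa [hvec]
  have hTbdd : BddBelow T := hvbdd.mono hTS
  have hSne : S.Nonempty := hTne.mono hTS
  apply le_antisymm
  · exact csInf_le_csInf hvbdd hTne hTS
  · apply le_csInf hSne
    rintro v ⟨x, y, z, ⟨hx0, hxJ, hcon, hy1, hy2, hG⟩, hv⟩
    have : y ∈ Set.range ybar := by
      rw [hrange]
      exact ⟨⟨hy1, hy2⟩, z, hG⟩
    obtain ⟨k₀, hk₀⟩ := this
    have hwT : (∑ j, c j * x j) + fbar k₀ ∈ T := by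
      refine ⟨x, fun k => if k = k₀ then 1 else 0, ⟨hx0, hxJ, ?_, ?_, ?_⟩, ?_⟩
      · intro k
        by_cases h : k = k₀ <;> simp [h]
      · simp
      · have hvec : (∑ k, (if k = k₀ then (1:ℝ) else 0) • fun i => ((ybar k) i : ℝ))
            = fun i => ((y) i : ℝ) := by
          rw [Finset.sum_eq_single k₀]
          · simp [hk₀]
          · intro k _ hk
            simp [hk]
          · intro h
            exact absurd (Finset.mem_univ k₀) h
        rwa [hvec]
      · congr 1
        rw [Finset.sum_eq_single k₀]
        · simp
        · intro k _ hk
          simp [hk]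
        · intro h
          exact absurd (Finset.mem_univ k₀) h
    have hfle : fbar k₀ ≤ f y z := by
      rw [hfbar k₀]
      exact csInf_le (hbdd k₀) ⟨z, by rw [hk₀]; exact ⟨hG, rfl⟩⟩
    calc sInf T ≤ (∑ j, c j * x j) + fbar k₀ := csInf_le hTbdd hwT
      _ ≤ v := by rw [hv]; linarith
end

section
/- Let π : Fin n → ℝ with π ≥ 0 and Aᵀ.mulVec π ≤ c componentwise, and let μ, ζ ∈ ℝ be such that for every k ∈ K the reduced cost satisfies f̄ k − (∑ i, π i * (D.mulVec (fun i => ((ȳ k) i : ℝ))) i) − μ ≥ ζ. Then every pair (x, λ) feasible for (M̄P) satisfies (∑ j, c j * x j) + ∑ k, λ k * f̄ k ≥ (∑ i, π i * b i) + μ + ζ; that is, the Lagrangian/weak-duality lower bound on the LP master objective holds. -/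
/-- Lagrangian/weak-duality lower bound for the LP master problem (M̄P):
dual-feasible `pr` (the duals π) and reduced-cost bound `ζ` give a lower bound
`π⊤b + μ + ζ` on the objective of every (M̄P)-feasible point. -/
theorem lp_master_weak_duality_bound
    (p m n : ℕ) (K : Type*) [Fintype K] [Nonempty K]
    (ybar : K → (Fin p → ℤ)) (fbar : K → ℝ)
    (c : Fin m → ℝ) (b : Fin n → ℝ)
    (A : Matrix (Fin n) (Fin m) ℝ) (D : Matrix (Fin n) (Fin p) ℝ)
    (pr : Fin n → ℝ) (hpr : 0 ≤ pr) (hdual : A.transpose.mulVec pr ≤ c)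
    (μ ζ : ℝ)
    (hred : ∀ k, fbar k - (∑ i, pr i * (D.mulVec fun i => ((ybar k) i : ℝ)) i)
        - μ ≥ ζ)
    -- (x, λ) feasible for (M̄P):
    (x : Fin m → ℝ) (lam : K → ℝ)
    (hx : 0 ≤ x) (hlam : 0 ≤ lam) (hsum : (∑ k, lam k) = 1)
    (hcon : b ≤ A.mulVec x +
        D.mulVec (∑ k, lam k • fun i => ((ybar k) i : ℝ))) :
    (∑ j, c j * x j) + ∑ k, lam k * fbar k ≥ (∑ i, pr i * b i) + μ + ζ := by
  set y : Fin p → ℝ := ∑ k, lam k • fun i => ((ybar k) i : ℝ) with hy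
  -- π·b ≤ π·(Ax) + π·(Dy)
  have h1 : ∑ i, pr i * b i ≤
      (∑ i, pr i * A.mulVec x i) + ∑ i, pr i * D.mulVec y i := by
    rw [← Finset.sum_add_distrib]
    refine Finset.sum_le_sum fun i _ => ?_
    rw [← mul_add]
    exact mul_le_mul_of_nonneg_left (hcon i) (hpr i)
  -- π·(Ax) ≤ c·x
  have h2 : ∑ i, pr i * A.mulVec x i ≤ ∑ j, c j * x j := by
    have : ∑ i, pr i * A.mulVec x i = ∑ j, A.transpose.mulVec pr j * x j := by
      simp only [Matrix.mulVec, dotProduct, Matrix.transpose_apply,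
        Finset.mul_sum, Finset.sum_mul]
      rw [Finset.sum_comm]
      exact Finset.sum_congr rfl fun j _ => Finset.sum_congr rfl fun i _ => by ring
    rw [this]
    exact Finset.sum_le_sum fun j _ =>
      mul_le_mul_of_nonneg_right (hdual j) (hx j)
  -- π·(Dy) = ∑ₖ λₖ (π·(D ȳₖ))
  have hDy : D.mulVec y = ∑ k, lam k • D.mulVec (fun i => ((ybar k) i : ℝ)) := by
    rw [hy]
    rw [show D.mulVec (∑ k, lam k • fun i => ((ybar k) i : ℝ)) =
        D.mulVecLin (∑ k, lam k • fun i => ((ybar k) i : ℝ)) from rfl]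
    rw [map_sum]
    simp [Matrix.mulVecLin]
  have h3 : ∑ i, pr i * D.mulVec y i
      = ∑ k, lam k * ∑ i, pr i * (D.mulVec fun i => ((ybar k) i : ℝ)) i := by
    rw [hDy]
    simp only [Finset.sum_apply, Pi.smul_apply, smul_eq_mul, Finset.mul_sum]
    rw [Finset.sum_comm]
    exact Finset.sum_congr rfl fun k _ => Finset.sum_congr rfl fun i _ => by ring
  -- reduced costs: ∑ₖ λₖ f̄ₖ ≥ ∑ₖ λₖ (π·(D ȳₖ)) + μ + ζ
  have h4 : ∑ k, lam k * fbar k ≥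
      (∑ k, lam k * ∑ i, pr i * (D.mulVec fun i => ((ybar k) i : ℝ)) i) + μ + ζ := by
    have : ∑ k, lam k * fbar k ≥
        ∑ k, lam k * ((∑ i, pr i * (D.mulVec fun i => ((ybar k) i : ℝ)) i) + μ + ζ) := by
      refine Finset.sum_le_sum fun k _ => ?_
      have := hred k
      exact mul_le_mul_of_nonneg_left (by linarith) (hlam k)
    calc ∑ k, lam k * fbar k
        ≥ ∑ k, lam k * ((∑ i, pr i * (D.mulVec fun i => ((ybar k) i : ℝ)) i) + μ + ζ) := this
      _ = (∑ k, lam k * ∑ i, pr i * (D.mulVec fun i => ((ybar k) i : ℝ)) i)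
          + (∑ k, lam k) * (μ + ζ) := by
          rw [Finset.sum_mul, ← Finset.sum_add_distrib]
          exact Finset.sum_congr rfl fun k _ => by ring
      _ = (∑ k, lam k * ∑ i, pr i * (D.mulVec fun i => ((ybar k) i : ℝ)) i) + μ + ζ := by
          rw [hsum]; ring
  rw [← h3] at h4
  linarith
end

section
/- Let K̂ ⊆ K and suppose (R̄MP) is feasible. Let π : Fin n → ℝ with π ≥ 0 and Aᵀ.mulVec π ≤ c componentwise, and μ, ζ ∈ ℝ with f̄ k − (∑ i, π i * (D.mulVec (fun i => ((ȳ k) i : ℝ))) i) − μ ≥ ζ for every k ∈ K, and assume strong duality for the restricted problem: (∑ i, π i * b i) + μ = v^R̄MP. Then v^R̄MP + ζ ≤ v^M̄P ≤ v^R̄MP; that is, the column generation bounds of equation (7) hold. -/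
/-- Column generation bounds (equation (7)): if (R̄MP) is feasible, the duals
`pr, μ` are dual feasible with strong duality for the restricted problem, and
`ζ` bounds the reduced costs from below over the full column set, then
`v^R̄MP + ζ ≤ v^M̄P ≤ v^R̄MP`. -/
theorem column_generation_bounds
    (p m n : ℕ) (K : Type*) [Fintype K] [Nonempty K]
    (ybar : K → (Fin p → ℤ)) (fbar : K → ℝ)
    (c : Fin m → ℝ) (b : Fin n → ℝ)
    (A : Matrix (Fin n) (Fin m) ℝ) (D : Matrix (Fin n) (Fin p) ℝ)
    (Khat : Set K)
    -- (R̄MP) is feasible: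
    (hfeas : ∃ (x : Fin m → ℝ) (lam : K → ℝ),
      0 ≤ x ∧ 0 ≤ lam ∧ (∑ k, lam k) = 1 ∧
      b ≤ A.mulVec x + D.mulVec (∑ k, lam k • fun i => ((ybar k) i : ℝ)) ∧
      ∀ k ∉ Khat, lam k = 0)
    (pr : Fin n → ℝ) (hpr : 0 ≤ pr) (hdual : A.transpose.mulVec pr ≤ c)
    (μ ζ : ℝ)
    (hred : ∀ k, fbar k - (∑ i, pr i * (D.mulVec fun i => ((ybar k) i : ℝ)) i)
        - μ ≥ ζ)
    -- strong duality for the restricted problem: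
    (hstrong : (∑ i, pr i * b i) + μ =
      sInf {v : ℝ | ∃ (x : Fin m → ℝ) (lam : K → ℝ),
        (0 ≤ x ∧ 0 ≤ lam ∧ (∑ k, lam k) = 1 ∧
          b ≤ A.mulVec x +
            D.mulVec (∑ k, lam k • fun i => ((ybar k) i : ℝ)) ∧
          ∀ k ∉ Khat, lam k = 0) ∧
        v = (∑ j, c j * x j) + ∑ k, lam k * fbar k}) :
    sInf {v : ℝ | ∃ (x : Fin m → ℝ) (lam : K → ℝ),
        (0 ≤ x ∧ 0 ≤ lam ∧ (∑ k, lam k) = 1 ∧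
          b ≤ A.mulVec x +
            D.mulVec (∑ k, lam k • fun i => ((ybar k) i : ℝ)) ∧
          ∀ k ∉ Khat, lam k = 0) ∧
        v = (∑ j, c j * x j) + ∑ k, lam k * fbar k} + ζ ≤
      sInf {v : ℝ | ∃ (x : Fin m → ℝ) (lam : K → ℝ),
        (0 ≤ x ∧ 0 ≤ lam ∧ (∑ k, lam k) = 1 ∧
          b ≤ A.mulVec x +
            D.mulVec (∑ k, lam k • fun i => ((ybar k) i : ℝ))) ∧
        v = (∑ j, c j * x j) + ∑ k, lam k * fbar k} ∧
      sInf {v : ℝ | ∃ (x : Fin m → ℝ) (lam : K → ℝ),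
        (0 ≤ x ∧ 0 ≤ lam ∧ (∑ k, lam k) = 1 ∧
          b ≤ A.mulVec x +
            D.mulVec (∑ k, lam k • fun i => ((ybar k) i : ℝ))) ∧
        v = (∑ j, c j * x j) + ∑ k, lam k * fbar k} ≤
      sInf {v : ℝ | ∃ (x : Fin m → ℝ) (lam : K → ℝ),
        (0 ≤ x ∧ 0 ≤ lam ∧ (∑ k, lam k) = 1 ∧
          b ≤ A.mulVec x +
            D.mulVec (∑ k, lam k • fun i => ((ybar k) i : ℝ)) ∧
          ∀ k ∉ Khat, lam k = 0) ∧
        v = (∑ j, c j * x j) + ∑ k, lam k * fbar k} := by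
  classical
  set R : Set ℝ := {v : ℝ | ∃ (x : Fin m → ℝ) (lam : K → ℝ),
        (0 ≤ x ∧ 0 ≤ lam ∧ (∑ k, lam k) = 1 ∧
          b ≤ A.mulVec x +
            D.mulVec (∑ k, lam k • fun i => ((ybar k) i : ℝ)) ∧
          ∀ k ∉ Khat, lam k = 0) ∧
        v = (∑ j, c j * x j) + ∑ k, lam k * fbar k} with hR
  set M : Set ℝ := {v : ℝ | ∃ (x : Fin m → ℝ) (lam : K → ℝ),
        (0 ≤ x ∧ 0 ≤ lam ∧ (∑ k, lam k) = 1 ∧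
          b ≤ A.mulVec x +
            D.mulVec (∑ k, lam k • fun i => ((ybar k) i : ℝ))) ∧
        v = (∑ j, c j * x j) + ∑ k, lam k * fbar k} with hM
  -- key lower bound for any master-feasible point
  have key : ∀ v ∈ M, (∑ i, pr i * b i) + μ + ζ ≤ v := by
    rintro v ⟨x, lam, ⟨hx, hlam, hsum, hle⟩, rfl⟩
    set y : Fin p → ℝ := ∑ k, lam k • fun i => ((ybar k) i : ℝ) with hy
    have hb : ∑ i, pr i * b i ≤
        (∑ i, pr i * (A.mulVec x) i) + ∑ i, pr i * (D.mulVec y) i := by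
      rw [← Finset.sum_add_distrib]
      refine Finset.sum_le_sum fun i _ => ?_
      have := mul_le_mul_of_nonneg_left (hle i) (hpr i)
      simpa [mul_add] using this
    have hA : ∑ i, pr i * (A.mulVec x) i ≤ ∑ j, c j * x j := by
      have heq : ∑ i, pr i * (A.mulVec x) i
          = ∑ j, (A.transpose.mulVec pr) j * x j := by
        simp only [Matrix.mulVec, dotProduct, Matrix.transpose_apply,
          Finset.mul_sum, Finset.sum_mul]
        rw [Finset.sum_comm]
        congr 1; ext j; congr 1; ext i; ring
      rw [heq]
      exact Finset.sum_le_sum fun j _ =>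
        mul_le_mul_of_nonneg_right (hdual j) (hx j)
    have hDy : ∑ i, pr i * (D.mulVec y) i
        = ∑ k, lam k *
            (∑ i, pr i * (D.mulVec fun i => ((ybar k) i : ℝ)) i) := by
      have hlin : D.mulVec y
          = ∑ k, lam k • D.mulVec (fun i => ((ybar k) i : ℝ)) := by
        rw [hy]
        rw [show D.mulVec (∑ k, lam k • fun i => ((ybar k) i : ℝ))
            = D.mulVecLin (∑ k, lam k • fun i => ((ybar k) i : ℝ)) from rfl]
        rw [map_sum]
        simp [Matrix.mulVecLin_apply]
      rw [hlin]
      simp only [Finset.sum_apply, Pi.smul_apply, smul_eq_mul, Finset.mul_sum,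
        Finset.sum_mul]
      rw [Finset.sum_comm]
      congr 1; ext k; congr 1; ext i; ring
    have hf : ζ + μ + ∑ k, lam k *
          (∑ i, pr i * (D.mulVec fun i => ((ybar k) i : ℝ)) i)
        ≤ ∑ k, lam k * fbar k := by
      have h1 : ∑ k, lam k * (ζ + μ +
            (∑ i, pr i * (D.mulVec fun i => ((ybar k) i : ℝ)) i))
          ≤ ∑ k, lam k * fbar k := by
        refine Finset.sum_le_sum fun k _ => ?_
        have := hred k
        exact mul_le_mul_of_nonneg_left (by linarith) (hlam k)
      calc ζ + μ + ∑ k, lam k *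
              (∑ i, pr i * (D.mulVec fun i => ((ybar k) i : ℝ)) i)
          = ∑ k, lam k * (ζ + μ +
              (∑ i, pr i * (D.mulVec fun i => ((ybar k) i : ℝ)) i)) := by
            simp only [mul_add, Finset.sum_add_distrib, ← Finset.sum_mul, hsum]
            ring
        _ ≤ ∑ k, lam k * fbar k := h1
    linarith
  have hsub : R ⊆ M := by
    rintro v ⟨x, lam, ⟨hx, hlam, hsum, hle, _⟩, rfl⟩
    exact ⟨x, lam, ⟨hx, hlam, hsum, hle⟩, rfl⟩
  have hRne : R.Nonempty := by
    obtain ⟨x, lam, hx, hlam, hsum, hle, hz⟩ := hfeas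
    exact ⟨_, x, lam, ⟨hx, hlam, hsum, hle, hz⟩, rfl⟩
  have hMne : M.Nonempty := hRne.mono hsub
  have hMbdd : BddBelow M := ⟨(∑ i, pr i * b i) + μ + ζ, key⟩
  constructor
  · rw [← hstrong]
    exact le_csInf hMne fun v hv => by linarith [key v hv]
  · exact csInf_le_csInf hMbdd hRne hsub
end

section
/- Let K̂ ⊆ K and suppose (R̄MP) is feasible. Let π : Fin n → ℝ with π ≥ 0 and Aᵀ.mulVec π ≤ c componentwise, and μ ∈ ℝ with (∑ i, π i * b i) + μ = v^R̄MP. If the minimum reduced cost over the full column set is nonnegative, i.e., f̄ k − (∑ i, π i * (D.mulVec (fun i => ((ȳ k) i : ℝ))) i) − μ ≥ 0 for every k ∈ K, then v^M̄P = v^R̄MP; that is, when the pricing problem yields ζ = 0 the column generation algorithm terminates at the optimal value of the full LP master problem. -/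
/-- Termination of column generation: if the duals `pr, μ` are dual feasible
with strong duality for the restricted problem and every column of the full
set has nonnegative reduced cost (i.e. ζ = 0 in the pricing problem), then
`v^M̄P = v^R̄MP`. -/
theorem column_generation_termination
    (p m n : ℕ) (K : Type*) [Fintype K] [Nonempty K]
    (ybar : K → (Fin p → ℤ)) (fbar : K → ℝ)
    (c : Fin m → ℝ) (b : Fin n → ℝ)
    (A : Matrix (Fin n) (Fin m) ℝ) (D : Matrix (Fin n) (Fin p) ℝ)
    (Khat : Set K)
    -- (R̄MP) is feasible:
    (hfeas : ∃ (x : Fin m → ℝ) (lam : K → ℝ),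
      0 ≤ x ∧ 0 ≤ lam ∧ (∑ k, lam k) = 1 ∧
      b ≤ A.mulVec x + D.mulVec (∑ k, lam k • fun i => ((ybar k) i : ℝ)) ∧
      ∀ k ∉ Khat, lam k = 0)
    (pr : Fin n → ℝ) (hpr : 0 ≤ pr) (hdual : A.transpose.mulVec pr ≤ c)
    (μ : ℝ)
    -- strong duality for the restricted problem:
    (hstrong : (∑ i, pr i * b i) + μ =
      sInf {v : ℝ | ∃ (x : Fin m → ℝ) (lam : K → ℝ),
        (0 ≤ x ∧ 0 ≤ lam ∧ (∑ k, lam k) = 1 ∧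
          b ≤ A.mulVec x +
            D.mulVec (∑ k, lam k • fun i => ((ybar k) i : ℝ)) ∧
          ∀ k ∉ Khat, lam k = 0) ∧
        v = (∑ j, c j * x j) + ∑ k, lam k * fbar k})
    -- nonnegative minimum reduced cost over the full column set:
    (hred : ∀ k, fbar k - (∑ i, pr i * (D.mulVec fun i => ((ybar k) i : ℝ)) i)
        - μ ≥ 0) :
    sInf {v : ℝ | ∃ (x : Fin m → ℝ) (lam : K → ℝ),
        (0 ≤ x ∧ 0 ≤ lam ∧ (∑ k, lam k) = 1 ∧
          b ≤ A.mulVec x +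
            D.mulVec (∑ k, lam k • fun i => ((ybar k) i : ℝ))) ∧
        v = (∑ j, c j * x j) + ∑ k, lam k * fbar k} =
      sInf {v : ℝ | ∃ (x : Fin m → ℝ) (lam : K → ℝ),
        (0 ≤ x ∧ 0 ≤ lam ∧ (∑ k, lam k) = 1 ∧
          b ≤ A.mulVec x +
            D.mulVec (∑ k, lam k • fun i => ((ybar k) i : ℝ)) ∧
          ∀ k ∉ Khat, lam k = 0) ∧
        v = (∑ j, c j * x j) + ∑ k, lam k * fbar k} := by
  classical
  set SM := {v : ℝ | ∃ (x : Fin m → ℝ) (lam : K → ℝ),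
        (0 ≤ x ∧ 0 ≤ lam ∧ (∑ k, lam k) = 1 ∧
          b ≤ A.mulVec x +
            D.mulVec (∑ k, lam k • fun i => ((ybar k) i : ℝ))) ∧
        v = (∑ j, c j * x j) + ∑ k, lam k * fbar k} with hSM
  set SR := {v : ℝ | ∃ (x : Fin m → ℝ) (lam : K → ℝ),
        (0 ≤ x ∧ 0 ≤ lam ∧ (∑ k, lam k) = 1 ∧
          b ≤ A.mulVec x +
            D.mulVec (∑ k, lam k • fun i => ((ybar k) i : ℝ)) ∧
          ∀ k ∉ Khat, lam k = 0) ∧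
        v = (∑ j, c j * x j) + ∑ k, lam k * fbar k} with hSR
  have key : ∀ v ∈ SM, (∑ i, pr i * b i) + μ ≤ v := by
    rintro v ⟨x, lam, ⟨hx, hlam, hsum, hle⟩, rfl⟩
    have h1 : ∑ i, pr i * (A.mulVec x) i ≤ ∑ j, c j * x j := by
      have e1 : ∑ i, pr i * (A.mulVec x) i
          = ∑ j, (A.transpose.mulVec pr) j * x j := by
        simp only [Matrix.mulVec, dotProduct, Matrix.transpose_apply,
          Finset.mul_sum, Finset.sum_mul]
        rw [Finset.sum_comm]
        refine Finset.sum_congr rfl fun j _ => Finset.sum_congr rfl fun i _ => by ring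
      rw [e1]
      exact Finset.sum_le_sum fun j _ =>
        mul_le_mul_of_nonneg_right (hdual j) (hx j)
    have eD : D.mulVec (∑ k, lam k • fun i => ((ybar k) i : ℝ))
        = ∑ k, lam k • D.mulVec (fun i => ((ybar k) i : ℝ)) := by
      simp only [← Matrix.mulVecLin_apply, map_sum, map_smul]
    have e2 : ∑ i, pr i * (D.mulVec (∑ k, lam k • fun i => ((ybar k) i : ℝ))) i
        = ∑ k, lam k * ∑ i, pr i * (D.mulVec fun i => ((ybar k) i : ℝ)) i := by
      rw [eD]
      simp only [Finset.sum_apply, Pi.smul_apply, smul_eq_mul, Finset.mul_sum]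
      rw [Finset.sum_comm]
      refine Finset.sum_congr rfl fun k _ => Finset.sum_congr rfl fun i _ => by ring
    have h2 : (∑ i, pr i * (D.mulVec (∑ k, lam k • fun i => ((ybar k) i : ℝ))) i) + μ
        ≤ ∑ k, lam k * fbar k := by
      have : ∑ k, lam k * ((∑ i, pr i * (D.mulVec fun i => ((ybar k) i : ℝ)) i) + μ)
          ≤ ∑ k, lam k * fbar k := by
        refine Finset.sum_le_sum fun k _ =>
          mul_le_mul_of_nonneg_left ?_ (hlam k)
        linarith [hred k]
      calc (∑ i, pr i * (D.mulVec (∑ k, lam k • fun i => ((ybar k) i : ℝ))) i) + μ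
          = ∑ k, lam k * ((∑ i, pr i * (D.mulVec fun i => ((ybar k) i : ℝ)) i) + μ) := by
            rw [e2]
            simp only [mul_add, Finset.sum_add_distrib, ← Finset.sum_mul, hsum, one_mul]
        _ ≤ ∑ k, lam k * fbar k := this
    have h3 : ∑ i, pr i * b i
        ≤ (∑ i, pr i * (A.mulVec x) i)
          + ∑ i, pr i * (D.mulVec (∑ k, lam k • fun i => ((ybar k) i : ℝ))) i := by
      rw [← Finset.sum_add_distrib]
      refine Finset.sum_le_sum fun i _ => ?_
      rw [← mul_add]
      exact mul_le_mul_of_nonneg_left (hle i) (hpr i)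
    linarith
  have hRM : SR ⊆ SM := by
    rintro v ⟨x, lam, ⟨hx, hlam, hsum, hle, _⟩, rfl⟩
    exact ⟨x, lam, ⟨hx, hlam, hsum, hle⟩, rfl⟩
  have hRne : SR.Nonempty := by
    obtain ⟨x, lam, h1, h2, h3, h4, h5⟩ := hfeas
    exact ⟨_, x, lam, ⟨h1, h2, h3, h4, h5⟩, rfl⟩
  have hMne : SM.Nonempty := hRne.mono hRM
  have hbdd : BddBelow SM := ⟨(∑ i, pr i * b i) + μ, key⟩
  refine le_antisymm (csInf_le_csInf hbdd hRne hRM) ?_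
  rw [← hstrong]
  exact le_csInf hMne key
end

section
/- Let π : Fin n → ℝ with π ≥ 0 and Aᵀ.mulVec π ≤ c componentwise, μ : I → ℝ, and ζ : I → ℝ such that f̄ i k − (∑ j, π j * (D i).mulVec (fun t => ((ȳ i k) t : ℝ)) j) − μ i ≥ ζ i for every i ∈ I and k ∈ K i. Then every feasible (x, λ) of the decomposable LP master satisfies (∑ j, c j * x j) + ∑ i, ∑ k, λ i k * f̄ i k ≥ (∑ j, π j * b j) + (∑ i, μ i) + (∑ i, ζ i). Moreover, if K̂ i ⊆ K i for each i, the restricted problem (λ i k = 0 for k ∉ K̂ i) is feasible, and (∑ j, π j * b j) + ∑ i, μ i = v^R̄MP, then v^R̄MP + ∑ i, ζ i ≤ v^M̄P ≤ v^R̄MP (the bounds of equation (13)). -/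
/-- Bounds for the decomposable LP master (equation (13)): dual-feasible
`pr, μ` and subproblem reduced-cost bounds `ζ i` give the weak-duality lower
bound on every feasible objective value; with restricted feasibility and
strong duality for the restricted problem, `v^R̄MP + ∑ ζ i ≤ v^M̄P ≤ v^R̄MP`. -/
theorem decomposable_column_generation_bounds
    (m n : ℕ) (I : Type*) [Fintype I] [Nonempty I]
    (K : I → Type*) [∀ i, Fintype (K i)] [∀ i, Nonempty (K i)]
    (p : I → ℕ)
    (ybar : (i : I) → K i → (Fin (p i) → ℤ))
    (fbar : (i : I) → K i → ℝ)
    (c : Fin m → ℝ) (b : Fin n → ℝ)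
    (A : Matrix (Fin n) (Fin m) ℝ)
    (D : (i : I) → Matrix (Fin n) (Fin (p i)) ℝ)
    (pr : Fin n → ℝ) (hpr : 0 ≤ pr) (hdual : A.transpose.mulVec pr ≤ c)
    (μ ζ : I → ℝ)
    (hred : ∀ i, ∀ k : K i,
      fbar i k -
          (∑ j, pr j * ((D i).mulVec fun t => ((ybar i k) t : ℝ)) j) -
          μ i ≥ ζ i) :
    -- weak-duality lower bound for every feasible point:
    (∀ (x : Fin m → ℝ) (lam : (i : I) → K i → ℝ),
      (0 ≤ x ∧ (∀ i, ∀ k : K i, 0 ≤ lam i k) ∧ (∀ i, (∑ k, lam i k) = 1) ∧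
        b ≤ A.mulVec x +
          ∑ i, (D i).mulVec (∑ k, lam i k • fun t => ((ybar i k) t : ℝ))) →
      (∑ j, c j * x j) + ∑ i, ∑ k, lam i k * fbar i k ≥
        (∑ j, pr j * b j) + (∑ i, μ i) + (∑ i, ζ i)) ∧
    -- bounds of equation (13):
    (∀ Khat : (i : I) → Set (K i),
      (∃ (x : Fin m → ℝ) (lam : (i : I) → K i → ℝ),
        0 ≤ x ∧ (∀ i, ∀ k : K i, 0 ≤ lam i k) ∧ (∀ i, (∑ k, lam i k) = 1) ∧
        b ≤ A.mulVec x +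
          ∑ i, (D i).mulVec (∑ k, lam i k • fun t => ((ybar i k) t : ℝ)) ∧
        ∀ i, ∀ k ∉ Khat i, lam i k = 0) →
      ((∑ j, pr j * b j) + ∑ i, μ i =
        sInf {v : ℝ | ∃ (x : Fin m → ℝ) (lam : (i : I) → K i → ℝ),
          (0 ≤ x ∧ (∀ i, ∀ k : K i, 0 ≤ lam i k) ∧
            (∀ i, (∑ k, lam i k) = 1) ∧
            b ≤ A.mulVec x +
              ∑ i, (D i).mulVec
                (∑ k, lam i k • fun t => ((ybar i k) t : ℝ)) ∧
            ∀ i, ∀ k ∉ Khat i, lam i k = 0) ∧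
          v = (∑ j, c j * x j) + ∑ i, ∑ k, lam i k * fbar i k}) →
      (sInf {v : ℝ | ∃ (x : Fin m → ℝ) (lam : (i : I) → K i → ℝ),
          (0 ≤ x ∧ (∀ i, ∀ k : K i, 0 ≤ lam i k) ∧
            (∀ i, (∑ k, lam i k) = 1) ∧
            b ≤ A.mulVec x +
              ∑ i, (D i).mulVec
                (∑ k, lam i k • fun t => ((ybar i k) t : ℝ)) ∧
            ∀ i, ∀ k ∉ Khat i, lam i k = 0) ∧
          v = (∑ j, c j * x j) + ∑ i, ∑ k, lam i k * fbar i k} +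
          ∑ i, ζ i ≤
        sInf {v : ℝ | ∃ (x : Fin m → ℝ) (lam : (i : I) → K i → ℝ),
          (0 ≤ x ∧ (∀ i, ∀ k : K i, 0 ≤ lam i k) ∧
            (∀ i, (∑ k, lam i k) = 1) ∧
            b ≤ A.mulVec x +
              ∑ i, (D i).mulVec
                (∑ k, lam i k • fun t => ((ybar i k) t : ℝ))) ∧
          v = (∑ j, c j * x j) + ∑ i, ∑ k, lam i k * fbar i k} ∧
        sInf {v : ℝ | ∃ (x : Fin m → ℝ) (lam : (i : I) → K i → ℝ),
          (0 ≤ x ∧ (∀ i, ∀ k : K i, 0 ≤ lam i k) ∧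
            (∀ i, (∑ k, lam i k) = 1) ∧
            b ≤ A.mulVec x +
              ∑ i, (D i).mulVec
                (∑ k, lam i k • fun t => ((ybar i k) t : ℝ))) ∧
          v = (∑ j, c j * x j) + ∑ i, ∑ k, lam i k * fbar i k} ≤
        sInf {v : ℝ | ∃ (x : Fin m → ℝ) (lam : (i : I) → K i → ℝ),
          (0 ≤ x ∧ (∀ i, ∀ k : K i, 0 ≤ lam i k) ∧
            (∀ i, (∑ k, lam i k) = 1) ∧
            b ≤ A.mulVec x +
              ∑ i, (D i).mulVec
                (∑ k, lam i k • fun t => ((ybar i k) t : ℝ)) ∧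
            ∀ i, ∀ k ∉ Khat i, lam i k = 0) ∧
          v = (∑ j, c j * x j) + ∑ i, ∑ k, lam i k * fbar i k})) := by
  -- notation for the per-column dual prices
  set S : (i : I) → K i → ℝ :=
    fun i k => ∑ j, pr j * ((D i).mulVec fun t => ((ybar i k) t : ℝ)) j with hS
  have key : ∀ (x : Fin m → ℝ) (lam : (i : I) → K i → ℝ),
      (0 ≤ x ∧ (∀ i, ∀ k : K i, 0 ≤ lam i k) ∧ (∀ i, (∑ k, lam i k) = 1) ∧
        b ≤ A.mulVec x +
          ∑ i, (D i).mulVec (∑ k, lam i k • fun t => ((ybar i k) t : ℝ))) →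
      (∑ j, c j * x j) + ∑ i, ∑ k, lam i k * fbar i k ≥
        (∑ j, pr j * b j) + (∑ i, μ i) + (∑ i, ζ i) := by
    rintro x lam ⟨hx, hlam, hsum, hfeas⟩
    have hlin : ∀ i, ∑ j, pr j *
        ((D i).mulVec (∑ k, lam i k • fun t => ((ybar i k) t : ℝ))) j
        = ∑ k, lam i k * S i k := by
      intro i
      have hmv : (D i).mulVec (∑ k, lam i k • fun t => ((ybar i k) t : ℝ))
          = ∑ k, lam i k • (D i).mulVec (fun t => ((ybar i k) t : ℝ)) := by
        ext j
        simp [Matrix.mulVec, dotProduct, Finset.mul_sum,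
          Finset.sum_apply, Finset.sum_mul]
        rw [Finset.sum_comm]
        congr 1; ext k; congr 1; ext t; ring
      rw [hmv, hS]
      simp only [Finset.sum_apply, Pi.smul_apply, smul_eq_mul, Finset.mul_sum]
      rw [Finset.sum_comm]
      congr 1; ext k; congr 1; ext j; ring
    have h1 : ∑ j, pr j * b j ≤
        ∑ j, pr j * (A.mulVec x +
          ∑ i, (D i).mulVec (∑ k, lam i k • fun t => ((ybar i k) t : ℝ))) j :=
      Finset.sum_le_sum fun j _ => mul_le_mul_of_nonneg_left (hfeas j) (hpr j)
    have h2 : ∑ j, pr j * (A.mulVec x +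
          ∑ i, (D i).mulVec (∑ k, lam i k • fun t => ((ybar i k) t : ℝ))) j
        = (∑ j, pr j * A.mulVec x j) + ∑ i, ∑ k, lam i k * S i k := by
      simp only [Pi.add_apply, Finset.sum_apply, mul_add, Finset.mul_sum,
        Finset.sum_add_distrib]
      congr 1
      rw [Finset.sum_comm]
      exact Finset.sum_congr rfl fun i _ => hlin i
    have h3 : ∑ j, pr j * A.mulVec x j ≤ ∑ t, c t * x t := by
      have : ∑ j, pr j * A.mulVec x j = ∑ t, A.transpose.mulVec pr t * x t := by
        have := Matrix.dotProduct_mulVec pr A x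
        simpa [dotProduct, Matrix.mulVec_transpose] using this
      rw [this]
      exact Finset.sum_le_sum fun t _ =>
        mul_le_mul_of_nonneg_right (hdual t) (hx t)
    have h4 : ∀ i, μ i + ζ i + ∑ k, lam i k * S i k ≤
        ∑ k, lam i k * fbar i k := by
      intro i
      have : ∑ k, lam i k * (μ i + ζ i + S i k) ≤ ∑ k, lam i k * fbar i k := by
        refine Finset.sum_le_sum fun k _ =>
          mul_le_mul_of_nonneg_left ?_ (hlam i k)
        simp only [hS]
        linarith [hred i k]
      calc μ i + ζ i + ∑ k, lam i k * S i k
          = ∑ k, lam i k * (μ i + ζ i + S i k) := by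
            simp only [mul_add, Finset.sum_add_distrib, ← Finset.sum_mul,
              hsum i]
            ring
        _ ≤ ∑ k, lam i k * fbar i k := this
    have h5 : (∑ i, μ i) + (∑ i, ζ i) + ∑ i, ∑ k, lam i k * S i k ≤
        ∑ i, ∑ k, lam i k * fbar i k := by
      have := Finset.sum_le_sum fun i (_ : i ∈ Finset.univ) => h4 i
      simpa [Finset.sum_add_distrib] using this
    rw [h2] at h1
    linarith
  refine ⟨key, ?_⟩
  rintro Khat ⟨x0, lam0, hx0, hlam0, hsum0, hfeas0, hsupp0⟩ heq
  set L : ℝ := (∑ j, pr j * b j) + (∑ i, μ i) + (∑ i, ζ i) with hL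
  -- the full and restricted value sets
  set M : Set ℝ := {v : ℝ | ∃ (x : Fin m → ℝ) (lam : (i : I) → K i → ℝ),
      (0 ≤ x ∧ (∀ i, ∀ k : K i, 0 ≤ lam i k) ∧
        (∀ i, (∑ k, lam i k) = 1) ∧
        b ≤ A.mulVec x +
          ∑ i, (D i).mulVec
            (∑ k, lam i k • fun t => ((ybar i k) t : ℝ))) ∧
      v = (∑ j, c j * x j) + ∑ i, ∑ k, lam i k * fbar i k} with hM
  set R : Set ℝ := {v : ℝ | ∃ (x : Fin m → ℝ) (lam : (i : I) → K i → ℝ),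
      (0 ≤ x ∧ (∀ i, ∀ k : K i, 0 ≤ lam i k) ∧
        (∀ i, (∑ k, lam i k) = 1) ∧
        b ≤ A.mulVec x +
          ∑ i, (D i).mulVec
            (∑ k, lam i k • fun t => ((ybar i k) t : ℝ)) ∧
        ∀ i, ∀ k ∉ Khat i, lam i k = 0) ∧
      v = (∑ j, c j * x j) + ∑ i, ∑ k, lam i k * fbar i k} with hR
  have hRM : R ⊆ M := by
    rintro v ⟨x, lam, ⟨h1, h2, h3, h4, _⟩, hv⟩
    exact ⟨x, lam, ⟨h1, h2, h3, h4⟩, hv⟩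
  have hRne : R.Nonempty :=
    ⟨_, x0, lam0, ⟨hx0, hlam0, hsum0, hfeas0, hsupp0⟩, rfl⟩
  have hMne : M.Nonempty := hRne.mono hRM
  have hMlb : ∀ v ∈ M, L ≤ v := by
    rintro v ⟨x, lam, hf, hv⟩
    rw [hv]
    exact key x lam hf
  have hMbdd : BddBelow M := ⟨L, hMlb⟩
  constructor
  · rw [← heq]
    have : L ≤ sInf M := le_csInf hMne hMlb
    rw [hL] at this
    linarith
  · exact csInf_le_csInf hMbdd hRne hRM
end

section
/- Suppose K̂ i ⊆ K i for each i ∈ I and the restricted decomposable problem (λ i k = 0 for k ∉ K̂ i) is feasible. Let π : Fin n → ℝ with π ≥ 0 and Aᵀ.mulVec π ≤ c componentwise, μ : I → ℝ with (∑ j, π j * b j) + ∑ i, μ i = v^R̄MP, and ζ : I → ℝ with f̄ i k − (∑ j, π j * (D i).mulVec (fun t => ((ȳ i k) t : ℝ)) j) − μ i ≥ ζ i for every i ∈ I and k ∈ K i. Then ∑ i, ζ i ≤ 0; that is, while individual subproblem reduced-cost minima ζ i need not be nonpositive, their sum is nonpositive. -/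
/-- In the decomposable case, the subproblem reduced-cost minima `ζ i` need
not all be nonpositive, but their sum is: `∑ i, ζ i ≤ 0`. -/
theorem sum_of_subproblem_reduced_costs_nonpositive
    (m n : ℕ) (I : Type*) [Fintype I] [Nonempty I]
    (K : I → Type*) [∀ i, Fintype (K i)] [∀ i, Nonempty (K i)]
    (p : I → ℕ)
    (ybar : (i : I) → K i → (Fin (p i) → ℤ))
    (fbar : (i : I) → K i → ℝ)
    (c : Fin m → ℝ) (b : Fin n → ℝ)
    (A : Matrix (Fin n) (Fin m) ℝ)
    (D : (i : I) → Matrix (Fin n) (Fin (p i)) ℝ)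
    (Khat : (i : I) → Set (K i))
    -- the restricted decomposable problem is feasible:
    (hfeas : ∃ (x : Fin m → ℝ) (lam : (i : I) → K i → ℝ),
      0 ≤ x ∧ (∀ i, ∀ k : K i, 0 ≤ lam i k) ∧ (∀ i, (∑ k, lam i k) = 1) ∧
      b ≤ A.mulVec x +
        ∑ i, (D i).mulVec (∑ k, lam i k • fun t => ((ybar i k) t : ℝ)) ∧
      ∀ i, ∀ k ∉ Khat i, lam i k = 0)
    (pr : Fin n → ℝ) (hpr : 0 ≤ pr) (hdual : A.transpose.mulVec pr ≤ c)
    (μ : I → ℝ)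
    -- strong duality for the restricted problem:
    (hstrong : (∑ j, pr j * b j) + ∑ i, μ i =
      sInf {v : ℝ | ∃ (x : Fin m → ℝ) (lam : (i : I) → K i → ℝ),
        (0 ≤ x ∧ (∀ i, ∀ k : K i, 0 ≤ lam i k) ∧
          (∀ i, (∑ k, lam i k) = 1) ∧
          b ≤ A.mulVec x +
            ∑ i, (D i).mulVec
              (∑ k, lam i k • fun t => ((ybar i k) t : ℝ)) ∧
          ∀ i, ∀ k ∉ Khat i, lam i k = 0) ∧
        v = (∑ j, c j * x j) + ∑ i, ∑ k, lam i k * fbar i k})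
    (ζ : I → ℝ)
    (hred : ∀ i, ∀ k : K i,
      fbar i k -
          (∑ j, pr j * ((D i).mulVec fun t => ((ybar i k) t : ℝ)) j) -
          μ i ≥ ζ i) :
    ∑ i, ζ i ≤ 0 := by
  classical
  set S : Set ℝ := {v : ℝ | ∃ (x : Fin m → ℝ) (lam : (i : I) → K i → ℝ),
        (0 ≤ x ∧ (∀ i, ∀ k : K i, 0 ≤ lam i k) ∧
          (∀ i, (∑ k, lam i k) = 1) ∧
          b ≤ A.mulVec x +
            ∑ i, (D i).mulVec
              (∑ k, lam i k • fun t => ((ybar i k) t : ℝ)) ∧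
          ∀ i, ∀ k ∉ Khat i, lam i k = 0) ∧
        v = (∑ j, c j * x j) + ∑ i, ∑ k, lam i k * fbar i k} with hS
  obtain ⟨x₀, lam₀, h₀⟩ := hfeas
  have hSne : S.Nonempty := ⟨_, x₀, lam₀, h₀, rfl⟩
  have hbound : ∀ v ∈ S,
      ((∑ j, pr j * b j) + ∑ i, ζ i) + ∑ i, μ i ≤ v := by
    rintro v ⟨x, lam, ⟨hx, hlam, hsum, hge, -⟩, rfl⟩
    -- linearity of mulVec
    have hDi : ∀ i, (D i).mulVec (∑ k, lam i k • fun t => ((ybar i k) t : ℝ))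
        = ∑ k, lam i k • (D i).mulVec (fun t => ((ybar i k) t : ℝ)) := by
      intro i
      rw [← Matrix.mulVecLin_apply, map_sum]
      simp [Matrix.mulVecLin_apply, Matrix.mulVec_smul]
    -- step 1
    have h1 : ∑ j, pr j * A.mulVec x j ≤ ∑ j, c j * x j := by
      have : ∑ j, pr j * A.mulVec x j = ∑ j, A.transpose.mulVec pr j * x j := by
        simp only [Matrix.mulVec, dotProduct, Matrix.transpose_apply,
          Finset.mul_sum, Finset.sum_mul]
        rw [Finset.sum_comm]
        congr 1; ext j; congr 1; ext t; ring
      rw [this]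
      exact Finset.sum_le_sum fun j _ =>
        mul_le_mul_of_nonneg_right (hdual j) (hx j)
    -- step 2
    have h2 : ∀ i, ζ i + μ i +
        ∑ j, pr j * ((D i).mulVec (∑ k, lam i k • fun t => ((ybar i k) t : ℝ))) j
        ≤ ∑ k, lam i k * fbar i k := by
      intro i
      have hdd : ∑ j, pr j * ((D i).mulVec (∑ k, lam i k • fun t => ((ybar i k) t : ℝ))) j
          = ∑ k, lam i k * ∑ j, pr j * ((D i).mulVec fun t => ((ybar i k) t : ℝ)) j := by
        rw [hDi i]
        simp only [Finset.sum_apply, Pi.smul_apply, smul_eq_mul, Finset.mul_sum]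
        rw [Finset.sum_comm]
        refine Finset.sum_congr rfl fun k _ => Finset.sum_congr rfl fun j _ => by ring
      rw [hdd]
      have : ∑ k, lam i k * (ζ i + μ i + ∑ j, pr j * ((D i).mulVec fun t => ((ybar i k) t : ℝ)) j)
          ≤ ∑ k, lam i k * fbar i k := by
        refine Finset.sum_le_sum fun k _ => mul_le_mul_of_nonneg_left ?_ (hlam i k)
        have := hred i k
        linarith
      calc ζ i + μ i + ∑ k, lam i k * ∑ j, pr j * ((D i).mulVec fun t => ((ybar i k) t : ℝ)) j
          = ∑ k, lam i k * (ζ i + μ i + ∑ j, pr j * ((D i).mulVec fun t => ((ybar i k) t : ℝ)) j) := by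
            simp only [mul_add, Finset.sum_add_distrib, ← Finset.sum_mul, hsum i]
            ring
        _ ≤ ∑ k, lam i k * fbar i k := this
    -- step 3
    have h3 : ∑ j, pr j * b j ≤ (∑ j, pr j * A.mulVec x j) +
        ∑ i, ∑ j, pr j * ((D i).mulVec (∑ k, lam i k • fun t => ((ybar i k) t : ℝ))) j := by
      have := Finset.sum_le_sum (s := Finset.univ)
        (fun j (_ : j ∈ Finset.univ) => mul_le_mul_of_nonneg_left (hge j) (hpr j))
      calc ∑ j, pr j * b j
          ≤ ∑ j, pr j * (A.mulVec x +
            ∑ i, (D i).mulVec (∑ k, lam i k • fun t => ((ybar i k) t : ℝ))) j := this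
        _ = (∑ j, pr j * A.mulVec x j) +
            ∑ i, ∑ j, pr j * ((D i).mulVec (∑ k, lam i k • fun t => ((ybar i k) t : ℝ))) j := by
            simp only [Pi.add_apply, Finset.sum_apply, mul_add, Finset.mul_sum,
              Finset.sum_add_distrib]
            rw [Finset.sum_comm]
    have h2' : (∑ i, ζ i) + (∑ i, μ i) +
        ∑ i, ∑ j, pr j * ((D i).mulVec (∑ k, lam i k • fun t => ((ybar i k) t : ℝ))) j
        ≤ ∑ i, ∑ k, lam i k * fbar i k := by
      have := Finset.sum_le_sum (s := Finset.univ) (fun i (_ : i ∈ Finset.univ) => h2 i)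
      simpa [Finset.sum_add_distrib] using this
    linarith
  have hle := le_csInf hSne hbound
  rw [← hstrong] at hle
  linarith
end
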